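/- Let G be a graph and let G' be the graph obtained from G by subdividing some edge of G twice (replacing an edge uv by a path u–a–b–v with two new vertices a, b). Then the vertex cover numbers satisfy τ(G) = τ(G') − 1. -/

import Mathlib

/-- The minimum size of a vertex cover of a finite graph. -/
noncomputable def vertexCoverNumber {V : Type} [Fintype V] (G : SimpleGraph V) : ℕ :=
  sInf {n : ℕ | ∃ C : Finset V,
    (∀ ⦃a b : V⦄, G.Adj a b → a ∈ C ∨ b ∈ C) ∧ C.card = n}

/-- The graph obtained from `G` by subdividing the edge `uv` twice: the edge `uv`
is removed and replaced by the path `u – a – b – v` through two new vertices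
`a = Sum.inr 0` and `b = Sum.inr 1`. -/
def doubleSubdivision {V : Type} [DecidableEq V] (G : SimpleGraph V) (u v : V) :
    SimpleGraph (V ⊕ Fin 2) :=
  SimpleGraph.fromRel (fun a b =>
    match a, b with
    | Sum.inl x, Sum.inl y => G.Adj x y ∧ ¬((x = u ∧ y = v) ∨ (x = v ∧ y = u))
    | Sum.inl x, Sum.inr j => (x = u ∧ j = 0) ∨ (x = v ∧ j = 1)
    | Sum.inr j, Sum.inr j' => j ≠ j'
    | _, _ => False)

/-!
A cover of `G` contains `u` or `v`; adding the new vertex adjacent to the other endpoint gives a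
cover of `G'`. Conversely, a cover `C'` of `G'` restricts to a cover of `G - uv` and contains `a`
or `b`. If the restriction contains `u` or `v`, it already covers `G`; otherwise `C'` must contain
both `a` and `b`, and the restriction together with `u` covers `G` with `|C'| - 1` vertices.
-/

open Finset SimpleGraph

section VertexCover

variable {V : Type} [Fintype V] {G : SimpleGraph V}

theorem SimpleGraph.IsVertexCover.vertexCoverNumber_le {C : Finset V}
    (hC : G.IsVertexCover C) : vertexCoverNumber G ≤ #C :=
  Nat.sInf_le ⟨C, hC, rfl⟩

variable (G) in
theorem exists_isVertexCover_card_eq_vertexCoverNumber :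
    ∃ C : Finset V, G.IsVertexCover C ∧ #C = vertexCoverNumber G :=
  Nat.sInf_mem (s := {n | ∃ C : Finset V, G.IsVertexCover C ∧ #C = n})
    ⟨#univ, univ, by simp, rfl⟩

end VertexCover

theorem SimpleGraph.IsVertexCover.of_deleteEdges_singleton {V : Type*} {G : SimpleGraph V}
    {u v : V} {c : Set V} (hc : (G.deleteEdges {s(u, v)}).IsVertexCover c)
    (huv : u ∈ c ∨ v ∈ c) : G.IsVertexCover c := by
  intro x y hxy
  by_cases he : s(x, y) = s(u, v)
  · rcases Sym2.eq_iff.mp he with ⟨rfl, rfl⟩ | ⟨rfl, rfl⟩ <;> tauto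
  · exact hc (deleteEdges_adj.mpr ⟨hxy, he⟩)

namespace doubleSubdivision

variable {V : Type} [DecidableEq V] {G : SimpleGraph V} {u v : V}

@[simp]
theorem adj_inl_inl {x y : V} :
    (doubleSubdivision G u v).Adj (.inl x) (.inl y) ↔ G.Adj x y ∧ s(x, y) ≠ s(u, v) := by
  simp [doubleSubdivision]
  grind [SimpleGraph.adj_comm, SimpleGraph.Adj.ne]

@[simp]
theorem adj_inl_inr {x : V} {j : Fin 2} :
    (doubleSubdivision G u v).Adj (.inl x) (.inr j) ↔ x = u ∧ j = 0 ∨ x = v ∧ j = 1 := by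
  simp [doubleSubdivision]

@[simp]
theorem adj_inr_inl {x : V} {j : Fin 2} :
    (doubleSubdivision G u v).Adj (.inr j) (.inl x) ↔ x = u ∧ j = 0 ∨ x = v ∧ j = 1 := by
  simp [doubleSubdivision]

@[simp]
theorem adj_inr_inr {i j : Fin 2} :
    (doubleSubdivision G u v).Adj (.inr i) (.inr j) ↔ i ≠ j := by
  simp [doubleSubdivision]
  tauto

variable (G u v) in
def inlHom : G.deleteEdges {s(u, v)} →g doubleSubdivision G u v where
  toFun := Sum.inl
  map_rel' h := by simpa using h

theorem isVertexCover_disjSum_singleton {C : Finset V} (hC : G.IsVertexCover C) {j : Fin 2}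
    (hj : u ∈ C ∧ j = 1 ∨ v ∈ C ∧ j = 0) :
    (doubleSubdivision G u v).IsVertexCover ↑(C.disjSum {j}) := by
  rintro (x | i) (y | i') h <;> simp at h ⊢
  · exact hC h.1
  all_goals grind

theorem isVertexCover_toLeft {C : Finset (V ⊕ Fin 2)}
    (hC : (doubleSubdivision G u v).IsVertexCover C) :
    (G.deleteEdges {s(u, v)}).IsVertexCover C.toLeft := by
  convert hC.preimage (inlHom G u v)
  ext
  simp [inlHom]

theorem vertexCoverNumber_add_one_le_card [Fintype V] {C : Finset (V ⊕ Fin 2)}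
    (hC : (doubleSubdivision G u v).IsVertexCover C) : vertexCoverNumber G + 1 ≤ #C := by
  have hL := isVertexCover_toLeft hC
  rw [← card_toLeft_add_card_toRight]
  by_cases hmem : u ∈ C.toLeft ∨ v ∈ C.toLeft
  · have hR : C.toRight.Nonempty := by
      rcases hC (adj_inr_inr.mpr Fin.zero_ne_one) with h | h
      exacts [⟨0, mem_toRight.mpr h⟩, ⟨1, mem_toRight.mpr h⟩]
    have := (hL.of_deleteEdges_singleton hmem).vertexCoverNumber_le
    have := hR.card_pos
    omega
  · obtain ⟨hu, hv⟩ := not_or.mp hmem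
    have hR : C.toRight = univ := by
      have ha := hC (adj_inl_inr.mpr (.inl ⟨rfl, rfl⟩))
      have hb := hC (adj_inl_inr.mpr (.inr ⟨rfl, rfl⟩))
      simp only [Finset.mem_coe, ← mem_toLeft, hu, hv, false_or] at ha hb
      ext j
      fin_cases j <;> simpa
    have hcover : G.IsVertexCover ↑(insert u C.toLeft) :=
      (hL.subset (by simp)).of_deleteEdges_singleton (by simp)
    calc vertexCoverNumber G + 1
        ≤ #(insert u C.toLeft) + 1 := by grw [hcover.vertexCoverNumber_le]
      _ ≤ #C.toLeft + #C.toRight := by grw [card_insert_le, hR]; simp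

end doubleSubdivision

open doubleSubdivision in
/-- subdividing an edge of `G` twice increases the vertex cover
number by exactly one: `τ(G) = τ(G') − 1`. -/
theorem vertexCoverNumber_doubleSubdivision
    {V : Type} [Fintype V] [DecidableEq V] (G : SimpleGraph V) (u v : V)
    (huv : G.Adj u v) :
    vertexCoverNumber G = vertexCoverNumber (doubleSubdivision G u v) - 1 := by
  obtain ⟨C, hC, hCcard⟩ := exists_isVertexCover_card_eq_vertexCoverNumber G
  obtain ⟨C', hC', hC'card⟩ :=
    exists_isVertexCover_card_eq_vertexCoverNumber (doubleSubdivision G u v)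
  have hupper : vertexCoverNumber (doubleSubdivision G u v) ≤ vertexCoverNumber G + 1 := by
    obtain ⟨j, hj⟩ : ∃ j : Fin 2, u ∈ C ∧ j = 1 ∨ v ∈ C ∧ j = 0 := by
      rcases hC huv with h | h
      exacts [⟨1, .inl ⟨h, rfl⟩⟩, ⟨0, .inr ⟨h, rfl⟩⟩]
    simpa [hCcard] using (isVertexCover_disjSum_singleton hC hj).vertexCoverNumber_le
  have hlower := vertexCoverNumber_add_one_le_card hC'
  omega
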